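/- Main theorem: Let G be an infinite, one-ended finitely generated group, A a finite set, and H a discrete group. Then every continuous cocycle c : G × A^G → H over the full shift is cohomologous to a homomorphism: there exist a homomorphism φ : G → H and a continuous function b : A^G → H such that c(g,x) = b(g·x) · φ(g) · b(x)⁻¹ for all g ∈ G and x ∈ A^G. -/

import Mathlib

/-- Word norm with respect to a generating set `S`. -/
noncomputable def wordNorm {G : Type*} [Group G] (S : Set G) (g : G) : ℕ :=
  sInf {n | ∃ w : List G, (∀ s ∈ w, s ∈ S) ∧ w.length = n ∧ w.prod = g}

/-- Left-invariant word metric. -/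
noncomputable def wdist {G : Type*} [Group G] (S : Set G) (g h : G) : ℕ :=
  wordNorm S (g⁻¹ * h)

/-- Two elements are connected outside the ball of radius r if some path of
unit steps joins them with all vertices of word norm > r. -/
def WConnected {G : Type*} [Group G] (S : Set G) (r : ℕ) (g g' : G) : Prop :=
  ∃ (n : ℕ) (γ : ℕ → G), γ 0 = g ∧ γ n = g' ∧
    (∀ j < n, wdist S (γ j) (γ (j + 1)) = 1) ∧
    (∀ j ≤ n, r < wordNorm S (γ j))

/-- g lies in an unbounded connected component of the Cayley graph minus the
ball of radius r. -/
def InUnbounded {G : Type*} [Group G] (S : Set G) (r : ℕ) (g : G) : Prop :=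
  ∀ M : ℕ, ∃ g' : G, WConnected S r g g' ∧ M < wordNorm S g'

/-!
Continuity and compactness make every `c g` depend on finitely many coordinates; for the
generators these lie in a ball `B_T`. Writing `g⁻¹` as a walk to `1` in the Cayley graph
expresses `c g` as a product of values on generators, each of which sees `x` only near a vertex
of the walk. By one-endedness, a coordinate far from both `1` and `g⁻¹` can be avoided by such a
walk, so `c g` depends only on `x` near `1` and near `g⁻¹`, say on `B_M ∪ g⁻¹ B_M`.

Take `φ g = c(g, a₀^G)` and, for a fixed `h` with `|h| > 2M + 2`,
`b x = c(h, x|_{B_{M+1}})⁻¹ c(h, a₀^G)`, where `x|_{B_{M+1}}` is padded by `a₀`. For a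
generator `s`, the cocycle identity for `h s = (h s h⁻¹) h` and locality give
`c(s, x) = b(s·x) φ(s) b(x)⁻¹`; the elements satisfying this identity form a subgroup.
-/

open Function Topology

section DependsOn

variable {ι : Type*} {α : ι → Type*} {β : Type*} {f : (Π i, α i) → β}

theorem Continuous.exists_finite_dependsOn [∀ i, TopologicalSpace (α i)]
    [∀ i, CompactSpace (α i)] [TopologicalSpace β] [DiscreteTopology β] (hf : Continuous f) :
    ∃ s : Set ι, s.Finite ∧ DependsOn f s := by
  have hbox : ∀ x, ∃ I : Set ι, I.Finite ∧ ∃ t : Π i, Set (α i),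
      (∀ i, t i ∈ 𝓝 (x i)) ∧ I.pi t ⊆ f ⁻¹' {f x} := fun x => by
    rw [← Filter.mem_pi, ← nhds_pi]
    exact hf.continuousAt ((isOpen_discrete {f x}).mem_nhds rfl)
  choose I hI t ht hsub using hbox
  obtain ⟨F, -, hF⟩ := isCompact_univ.elim_nhds_subcover (fun x => (I x).pi (t x))
    fun x _ => set_pi_mem_nhds (hI x) fun i _ => ht x i
  refine ⟨⋃ x ∈ F, I x, F.finite_toSet.biUnion fun x _ => hI x, fun x y hxy => ?_⟩
  obtain ⟨x₀, hx₀F, hx⟩ := Set.mem_iUnion₂.1 (hF (Set.mem_univ x))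
  have hy : y ∈ (I x₀).pi (t x₀) := fun i hi => hxy i (Set.mem_biUnion hx₀F hi) ▸ hx i hi
  exact (hsub x₀ hx).trans (hsub x₀ hy).symm

theorem DependsOn.continuous_of_finite [∀ i, TopologicalSpace (α i)]
    [∀ i, DiscreteTopology (α i)] [TopologicalSpace β] [Nonempty β] {s : Set ι}
    (hs : s.Finite) (hf : DependsOn f s) : Continuous f := by
  obtain ⟨g, rfl⟩ := dependsOn_iff_exists_comp.1 hf
  have := hs.to_subtype
  exact continuous_of_discreteTopology.comp (continuous_pi fun i => continuous_apply _)

theorem DependsOn.of_update_eq [DecidableEq ι] {s t : Set ι} (hs : s.Finite) (hf : DependsOn f s)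
    (hupd : ∀ x i, i ∉ t → ∀ v : α i, f (Function.update x i v) = f x) : DependsOn f t := by
  intro x y hxy
  have key : ∀ D : Finset ι, f (D.piecewise y x) = f x := by
    intro D
    induction D using Finset.induction_on with
    | empty => simp
    | insert i D hi ih =>
      rw [Finset.piecewise_insert]
      by_cases hit : i ∈ t
      · rw [update_eq_self_iff.2 (by rw [Finset.piecewise_eq_of_notMem _ _ _ hi, hxy i hit]), ih]
      · rw [hupd _ i hit, ih]
  rw [← key hs.toFinset]
  exact hf fun i hi => by rw [Finset.piecewise_eq_of_mem _ _ _ (hs.mem_toFinset.2 hi)]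

end DependsOn

section WordNorm

variable {G : Type*} [Group G] {S : Set G}

lemma wordNorm_prod_le_length {w : List G} (hw : ∀ s ∈ w, s ∈ S) :
    wordNorm S w.prod ≤ w.length :=
  Nat.sInf_le (s := {n | ∃ v : List G, (∀ s ∈ v, s ∈ S) ∧ v.length = n ∧ v.prod = w.prod})
    ⟨w, hw, rfl, rfl⟩

lemma wordNorm_le_one_of_mem {s : G} (hs : s ∈ S) : wordNorm S s ≤ 1 := by
  simpa using wordNorm_prod_le_length (w := [s]) (by simpa)

lemma mem_of_wordNorm_eq_one {g : G} (h : wordNorm S g = 1) : g ∈ S := by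
  have hne : {n | ∃ w : List G, (∀ s ∈ w, s ∈ S) ∧ w.length = n ∧ w.prod = g}.Nonempty :=
    Nat.nonempty_of_pos_sInf (h ▸ one_pos : 0 < wordNorm S g)
  obtain ⟨w, hw, hl, hp⟩ := Nat.sInf_mem hne
  obtain ⟨a, rfl⟩ := List.length_eq_one_iff.1 (hl.trans h)
  simpa [← hp] using hw a (by simp)

lemma submonoid_closure_eq_top_of_inv_mem (hsym : ∀ s ∈ S, s⁻¹ ∈ S)
    (hgen : Subgroup.closure S = ⊤) :
    Submonoid.closure S = ⊤ := by
  have hinv : S ∪ S⁻¹ = S := Set.union_eq_left.2 fun s hs => by simpa using hsym _ hs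
  rw [← hinv, ← Subgroup.closure_toSubmonoid, hgen, Subgroup.top_toSubmonoid]

variable (hS : Submonoid.closure S = ⊤)
include hS

lemma exists_length_eq_wordNorm (g : G) :
    ∃ w : List G, (∀ s ∈ w, s ∈ S) ∧ w.length = wordNorm S g ∧ w.prod = g := by
  obtain ⟨w, hw, hp⟩ := Submonoid.exists_list_of_mem_closure (hS ▸ Submonoid.mem_top g)
  exact Nat.sInf_mem (s := {n | ∃ v : List G, (∀ s ∈ v, s ∈ S) ∧ v.length = n ∧ v.prod = g})
    ⟨w.length, w, hw, rfl, hp⟩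

lemma wordNorm_mul_le (a b : G) : wordNorm S (a * b) ≤ wordNorm S a + wordNorm S b := by
  obtain ⟨u, hu, hlu, rfl⟩ := exists_length_eq_wordNorm hS a
  obtain ⟨v, hv, hlv, rfl⟩ := exists_length_eq_wordNorm hS b
  rw [← hlu, ← hlv, ← List.prod_append, ← List.length_append]
  exact wordNorm_prod_le_length fun s hs => (List.mem_append.1 hs).elim (hu s) (hv s)

lemma wordNorm_inv (hsym : ∀ s ∈ S, s⁻¹ ∈ S) (g : G) : wordNorm S g⁻¹ = wordNorm S g := by
  have hle : ∀ a : G, wordNorm S a⁻¹ ≤ wordNorm S a := fun a => by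
    obtain ⟨w, hw, hl, rfl⟩ := exists_length_eq_wordNorm hS a
    rw [← hl, List.prod_inv_reverse, ← List.length_map (f := fun x : G => x⁻¹),
      ← List.length_reverse]
    refine wordNorm_prod_le_length fun s hs => ?_
    obtain ⟨t, ht, rfl⟩ := List.mem_map.1 (List.mem_reverse.1 hs)
    exact hsym t (hw t ht)
  exact (hle g).antisymm (by simpa using hle g⁻¹)

lemma wdist_comm (hsym : ∀ s ∈ S, s⁻¹ ∈ S) (a b : G) : wdist S a b = wdist S b a := by
  rw [wdist, wdist, ← wordNorm_inv hS hsym, mul_inv_rev, inv_inv]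

lemma wordNorm_prod_take {w : List G} (hw : ∀ s ∈ w, s ∈ S)
    (hl : w.length = wordNorm S w.prod) {k : ℕ} (hk : k ≤ w.length) :
    wordNorm S (w.take k).prod = k := by
  apply le_antisymm
  · simpa [hk] using
      wordNorm_prod_le_length (w := w.take k) fun s hs => hw s (List.mem_of_mem_take hs)
  · have hsplit := wordNorm_mul_le hS (w.take k).prod (w.drop k).prod
    have hdrop := wordNorm_prod_le_length (w := w.drop k) fun s hs => hw s (List.mem_of_mem_drop hs)
    rw [← List.prod_append, List.take_append_drop, ← hl] at hsplit
    rw [List.length_drop] at hdrop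
    omega

lemma finite_setOf_wordNorm_le (hfin : S.Finite) (n : ℕ) :
    {g : G | wordNorm S g ≤ n}.Finite := by
  have := hfin.to_subtype
  refine ((List.finite_length_le S n).image fun l => (l.map Subtype.val).prod).subset ?_
  intro g hg
  obtain ⟨w, hw, hl, rfl⟩ := exists_length_eq_wordNorm hS g
  lift w to List S using hw
  refine ⟨w, ?_, rfl⟩
  rw [Set.mem_ofPred_eq, ← List.length_map Subtype.val, hl]
  exact hg

lemma exists_lt_wordNorm [Infinite G] (hfin : S.Finite) (n : ℕ) : ∃ g : G, n < wordNorm S g := by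
  by_contra! h
  exact Set.infinite_univ ((finite_setOf_wordNorm_le hS hfin n).subset fun g _ => h g)

end WordNorm

section Connectivity

variable {G : Type*} [Group G] {S : Set G} {r : ℕ} {a b d : G}

lemma wdist_mul_left (k a b : G) : wdist S (k * a) (k * b) = wdist S a b := by
  rw [wdist, wdist, mul_inv_rev, mul_assoc, inv_mul_cancel_left]

lemma WConnected.symm (hS : Submonoid.closure S = ⊤) (hsym : ∀ s ∈ S, s⁻¹ ∈ S)
    (h : WConnected S r a b) : WConnected S r b a := by
  obtain ⟨n, γ, h0, hn, hstep, hnorm⟩ := h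
  refine ⟨n, fun j => γ (n - j), by simpa using hn, by simpa using h0, fun j hj => ?_,
    fun j _ => hnorm (n - j) (by omega)⟩
  dsimp only
  rw [wdist_comm hS hsym, show n - j = n - (j + 1) + 1 by omega]
  exact hstep (n - (j + 1)) (by omega)

lemma WConnected.trans (h₁ : WConnected S r a b) (h₂ : WConnected S r b d) :
    WConnected S r a d := by
  obtain ⟨n, γ, hγ0, hγn, hγs, hγb⟩ := h₁
  obtain ⟨m, δ, hδ0, hδm, hδs, hδb⟩ := h₂
  set ε : ℕ → G := fun j => if j ≤ n then γ j else δ (j - n)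
  have hε₁ : ∀ j ≤ n, ε j = γ j := fun j hj => if_pos hj
  have hε₂ : ∀ j, n ≤ j → ε j = δ (j - n) := fun j hj => by
    rcases hj.eq_or_lt with rfl | hj
    · simp [ε, hγn, hδ0]
    · exact if_neg (by omega)
  refine ⟨n + m, ε, by rw [hε₁ 0 (by omega), hγ0], by rw [hε₂ _ (by omega)]; simpa using hδm,
    fun j hj => ?_, fun j hj => ?_⟩
  · rcases lt_or_ge j n with h | h
    · rw [hε₁ j h.le, hε₁ (j + 1) h]
      exact hγs j h
    · rw [hε₂ j h, hε₂ (j + 1) (by omega), show j + 1 - n = j - n + 1 by omega]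
      exact hδs (j - n) (by omega)
  · rcases le_total j n with h | h
    · rw [hε₁ j h]; exact hγb j h
    · rw [hε₂ j h]; exact hδb (j - n) (by omega)

lemma InUnbounded.of_wconnected (hb : InUnbounded S r b) (h : WConnected S r a b) :
    InUnbounded S r a :=
  fun M => (hb M).imp fun _ ⟨hc, hM⟩ => ⟨h.trans hc, hM⟩

variable (hS : Submonoid.closure S = ⊤) (hsym : ∀ s ∈ S, s⁻¹ ∈ S)
include hS hsym

/-- Follow a geodesic from the sphere of radius `r + 1` out to `a`. -/
lemma exists_wconnected_sphere (ha : r < wordNorm S a) :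
    ∃ p, wordNorm S p = r + 1 ∧ WConnected S r a p := by
  obtain ⟨w, hw, hl, rfl⟩ := exists_length_eq_wordNorm hS a
  have hnorm : ∀ k ≤ w.length, wordNorm S (w.take k).prod = k :=
    fun k hk => wordNorm_prod_take hS hw hl hk
  refine ⟨(w.take (r + 1)).prod, hnorm _ (by omega), WConnected.symm hS hsym
    ⟨w.length - (r + 1), fun j => (w.take (r + 1 + j)).prod, rfl, ?_, fun j hj => ?_,
      fun j hj => by rw [hnorm _ (by omega)]; omega⟩⟩
  · dsimp only
    rw [Nat.add_sub_cancel' (by omega), List.take_length]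
  · have hlt : r + 1 + j < w.length := by omega
    have hle := wordNorm_le_one_of_mem (hw _ (List.getElem_mem hlt))
    have hge := wordNorm_mul_le hS (w.take (r + 1 + j)).prod w[r + 1 + j]
    rw [← List.prod_take_succ _ _ hlt, hnorm _ hlt, hnorm _ hlt.le] at hge
    dsimp only
    rw [wdist, ← add_assoc, List.prod_take_succ _ _ hlt, inv_mul_cancel_left]
    omega

/-- The sphere of radius `r + 1` is finite and meets every component outside `B_r`, so the
bounded components are bounded uniformly. -/
lemma exists_inUnbounded_of_lt_wordNorm (hfin : S.Finite) (r : ℕ) :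
    ∃ M, ∀ a : G, M < wordNorm S a → InUnbounded S r a := by
  set P := {p : G | wordNorm S p = r + 1 ∧ ¬ InUnbounded S r p}
  have hP : P.Finite := (finite_setOf_wordNorm_le hS hfin (r + 1)).subset fun p hp => hp.1.le
  obtain ⟨M, hM⟩ : BddAbove (⋃ p ∈ P, wordNorm S '' {g | WConnected S r p g}) := by
    refine hP.bddAbove_biUnion.2 fun p hp => ?_
    have hbdd := hp.2
    simp only [InUnbounded, not_forall, not_exists, not_and, not_lt] at hbdd
    obtain ⟨M, hM⟩ := hbdd
    exact ⟨M, by rintro _ ⟨g, hg, rfl⟩; exact hM g hg⟩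
  refine ⟨max r M, fun a ha => by_contra fun hunb => ?_⟩
  obtain ⟨p, hp, hap⟩ := exists_wconnected_sphere hS hsym (lt_of_le_of_lt (le_max_left r M) ha)
  have hpP : p ∈ P := ⟨hp, fun hpu => hunb (hpu.of_wconnected hap)⟩
  have := hM (Set.mem_biUnion hpP ⟨a, hap.symm hS hsym, rfl⟩)
  omega

lemma exists_wconnected_of_lt_wordNorm (hfin : S.Finite)
    (hOneEnd : ∀ r : ℕ, ∃ g₀ : G, InUnbounded S r g₀ ∧
      ∀ g : G, InUnbounded S r g → WConnected S r g g₀) (r : ℕ) :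
    ∃ M, ∀ a b : G, M < wordNorm S a → M < wordNorm S b → WConnected S r a b := by
  obtain ⟨M, hM⟩ := exists_inUnbounded_of_lt_wordNorm hS hsym hfin r
  obtain ⟨g₀, -, hg₀⟩ := hOneEnd r
  exact ⟨M, fun a b ha hb => (hg₀ a (hM a ha)).trans ((hg₀ b (hM b hb)).symm hS hsym)⟩

end Connectivity

section Cocycle

variable {G A H : Type*} [Group G] [Group H]

def leftShift (g : G) (x : G → A) : G → A := fun k => x (g⁻¹ * k)

@[simp] lemma leftShift_one (x : G → A) : leftShift 1 x = x := by
  funext k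
  simp [leftShift]

lemma leftShift_leftShift (g h : G) (x : G → A) :
    leftShift g (leftShift h x) = leftShift (g * h) x := by
  funext k
  simp [leftShift, mul_assoc]

def IsCocycle (c : G → (G → A) → H) : Prop :=
  ∀ g h x, c (g * h) x = c g (leftShift h x) * c h x

namespace IsCocycle

variable {c : G → (G → A) → H} (hc : IsCocycle c)
include hc

lemma apply_one (x : G → A) : c 1 x = 1 := by
  simpa using (hc 1 1 x).symm

lemma apply_inv (g : G) (x : G → A) : c g⁻¹ x = (c g (leftShift g⁻¹ x))⁻¹ := by
  refine eq_inv_of_mul_eq_one_right ?_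
  rw [← hc, mul_inv_cancel, hc.apply_one]

/-- Constant configurations are shift-invariant. -/
def constHom (a : A) : G →* H :=
  MonoidHom.mk' (fun g => c g fun _ => a) fun g h => hc g h _

def cohomologousSubgroup (φ : G →* H) (b : (G → A) → H) : Subgroup G where
  carrier := {g | ∀ x, c g x = b (leftShift g x) * φ g * (b x)⁻¹}
  one_mem' x := by simp [hc.apply_one]
  mul_mem' {g h} hg hh x := by
    rw [hc g h x, hg, hh, leftShift_leftShift, map_mul]
    group
  inv_mem' {g} hg x := by
    rw [hc.apply_inv, hg, leftShift_leftShift, mul_inv_cancel, leftShift_one, map_inv]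
    group

variable {S : Set G} {T : ℕ} (hwin : ∀ s ∈ S, DependsOn (c s) {k | wordNorm S k ≤ T})
include hwin

/-- Write `(γ 0)⁻¹` as the product of the steps of a walk ending at `1`: each step contributes a
value of `c` on a generator, which only sees `x` on the `T`-ball around the next vertex. -/
lemma apply_eq_of_walk {n : ℕ} {γ : ℕ → G} (hn : γ n = 1)
    (hstep : ∀ j < n, wdist S (γ j) (γ (j + 1)) = 1) {x y : G → A}
    (hxy : ∀ i, 0 < i → i ≤ n → ∀ k, wordNorm S k ≤ T → x (γ i * k) = y (γ i * k)) :
    c (γ 0)⁻¹ x = c (γ 0)⁻¹ y := by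
  induction n generalizing γ with
  | zero => rw [hn, inv_one, hc.apply_one, hc.apply_one]
  | succ n ih =>
    have hs : (γ 0)⁻¹ * γ 1 ∈ S := mem_of_wordNorm_eq_one (hstep 0 n.succ_pos)
    have htail : c (γ 1)⁻¹ x = c (γ 1)⁻¹ y :=
      ih (γ := fun j => γ (j + 1)) hn (fun j hj => hstep (j + 1) (by omega))
        fun i hi hin => hxy (i + 1) (by omega) (by omega)
    have hhead : c ((γ 0)⁻¹ * γ 1) (leftShift (γ 1)⁻¹ x) =
        c ((γ 0)⁻¹ * γ 1) (leftShift (γ 1)⁻¹ y) :=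
      hwin _ hs fun k hk => by
        simpa only [leftShift, inv_inv] using hxy 1 one_pos (by omega) k hk
    calc c (γ 0)⁻¹ x = c ((γ 0)⁻¹ * γ 1 * (γ 1)⁻¹) x := by rw [mul_inv_cancel_right]
      _ = c ((γ 0)⁻¹ * γ 1) (leftShift (γ 1)⁻¹ y) * c (γ 1)⁻¹ y := by rw [hc, hhead, htail]
      _ = c (γ 0)⁻¹ y := by rw [← hc, mul_inv_cancel_right]

variable (hS : Submonoid.closure S = ⊤) (hsym : ∀ s ∈ S, s⁻¹ ∈ S) {M : ℕ}
  (hconn : ∀ a b : G, M < wordNorm S a → M < wordNorm S b → WConnected S T a b)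
include hS hsym hconn

/-- One-endedness provides a walk from `g⁻¹` to `1` that keeps `T`-far from `a`. -/
lemma apply_update_eq [DecidableEq G] {g a : G} (ha : M < wordNorm S a)
    (hga : M < wordNorm S (g * a)) (x : G → A) (v : A) :
    c g (Function.update x a v) = c g x := by
  obtain ⟨n, δ, hδ0, hδn, hstep, hfar⟩ := hconn (a⁻¹ * g⁻¹) a⁻¹
    (by rwa [← mul_inv_rev, wordNorm_inv hS hsym]) (by rwa [wordNorm_inv hS hsym])
  have hwalk := hc.apply_eq_of_walk hwin (n := n) (γ := fun j => a * δ j)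
    (x := Function.update x a v) (y := x) (by simp [hδn])
    (fun j hj => by simpa only [wdist_mul_left] using hstep j hj)
    fun i _ hi k hk => Function.update_of_ne (fun heq => ?_) _ _
  · simpa [hδ0] using hwalk
  · rw [mul_assoc, mul_eq_left, ← eq_inv_iff_mul_eq_one] at heq
    have := hfar i hi
    rw [heq, wordNorm_inv hS hsym] at this
    omega

lemma dependsOn_of_wconnected {g : G} {W : Set G} (hW : W.Finite) (hgW : DependsOn (c g) W) :
    DependsOn (c g) {k | wordNorm S k ≤ M ∨ wordNorm S (g * k) ≤ M} := by
  classical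
  refine hgW.of_update_eq hW fun x a ha v => ?_
  simp only [Set.mem_ofPred_eq, not_or, not_le] at ha
  exact hc.apply_update_eq hwin hS hsym hconn ha.1 ha.2 x v

end IsCocycle

end Cocycle

section Transfer

variable {G A H : Type*} [Group G] [Group H]

noncomputable def truncate (S : Set G) (N : ℕ) (a₀ : A) (x : G → A) : G → A :=
  fun k => if wordNorm S k ≤ N then x k else a₀

noncomputable def truncTransfer (c : G → (G → A) → H) (S : Set G) (N : ℕ) (a₀ : A) (h : G)
    (x : G → A) : H :=
  (c h (truncate S N a₀ x))⁻¹ * c h fun _ => a₀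

lemma dependsOn_truncTransfer (c : G → (G → A) → H) (S : Set G) (N : ℕ) (a₀ : A) (h : G) :
    DependsOn (truncTransfer c S N a₀ h) {k | wordNorm S k ≤ N} := fun x y hxy => by
  have : truncate S N a₀ x = truncate S N a₀ y := funext fun k => by
    by_cases hk : wordNorm S k ≤ N <;> simp [truncate, hk, hxy k]
  rw [truncTransfer, truncTransfer, this]

section Truncate

variable {S : Set G} (hS : Submonoid.closure S = ⊤) (hsym : ∀ s ∈ S, s⁻¹ ∈ S)
  {M : ℕ} {a₀ : A} {s h k : G} (hs : s ∈ S) (x : G → A)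
include hS hsym hs

lemma truncate_apply_eq (hk : wordNorm S k ≤ M ∨ wordNorm S (s * k) ≤ M) :
    truncate S (M + 1) a₀ x k = x k := by
  have e := wordNorm_mul_le hS s⁻¹ (s * k)
  rw [inv_mul_cancel_left, wordNorm_inv hS hsym] at e
  have := wordNorm_le_one_of_mem hs
  exact if_pos (by omega)

variable (hh : 2 * M + 2 < wordNorm S h)
include hh

lemma truncate_leftShift_apply_eq (hk : wordNorm S k ≤ M ∨ wordNorm S (h * k) ≤ M) :
    truncate S (M + 1) a₀ (leftShift s x) k = leftShift s (truncate S (M + 1) a₀ x) k := by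
  have e₁ := wordNorm_mul_le hS s (s⁻¹ * k)
  have e₂ := wordNorm_mul_le hS s⁻¹ k
  have e₃ := wordNorm_mul_le hS (h * k) k⁻¹
  rw [mul_inv_cancel_left] at e₁
  rw [mul_inv_cancel_right, wordNorm_inv hS hsym] at e₃
  rw [wordNorm_inv hS hsym] at e₂
  have := wordNorm_le_one_of_mem hs
  simp only [truncate, leftShift]
  split_ifs <;> first | rfl | omega

lemma leftShift_truncate_apply_eq
    (hk : wordNorm S k ≤ M ∨ wordNorm S (h * s * h⁻¹ * k) ≤ M) :
    leftShift h (truncate S (M + 1) a₀ x) k = a₀ := by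
  have e₁ := wordNorm_mul_le hS k (h⁻¹ * k)⁻¹
  have e₂ := wordNorm_mul_le hS (h * s * h⁻¹ * k) (h⁻¹ * k)⁻¹
  have e₃ := wordNorm_mul_le hS (h * s * h⁻¹ * k * (h⁻¹ * k)⁻¹) s⁻¹
  rw [show k * (h⁻¹ * k)⁻¹ = h by group, wordNorm_inv hS hsym] at e₁
  rw [show h * s * h⁻¹ * k * (h⁻¹ * k)⁻¹ * s⁻¹ = h by group, wordNorm_inv hS hsym] at e₃
  rw [wordNorm_inv hS hsym] at e₂
  have := wordNorm_le_one_of_mem hs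
  exact if_neg (by omega)

end Truncate

/-- With `z` the truncation of `x` to `B_{M+1}`, locality gives
`c(h, trunc(s·x)) = c(h, s·z)`, `c(s, x) = c(s, z)` and `c(hsh⁻¹, a₀^G) = c(hsh⁻¹, h·z)`;
the cocycle identity for `h s = (h s h⁻¹) h` then closes the computation. -/
lemma IsCocycle.mem_cohomologousSubgroup {S : Set G} {c : G → (G → A) → H} (hc : IsCocycle c)
    (hS : Submonoid.closure S = ⊤) (hsym : ∀ s ∈ S, s⁻¹ ∈ S) {M : ℕ}
    (hloc : ∀ g, DependsOn (c g) {k | wordNorm S k ≤ M ∨ wordNorm S (g * k) ≤ M})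
    (a₀ : A) {h : G} (hh : 2 * M + 2 < wordNorm S h) {s : G} (hs : s ∈ S) :
    s ∈ hc.cohomologousSubgroup (hc.constHom a₀) (truncTransfer c S (M + 1) a₀ h) := by
  intro x
  set z := truncate S (M + 1) a₀ x
  have hshift : c h (truncate S (M + 1) a₀ (leftShift s x)) = c h (leftShift s z) :=
    hloc h fun _ hk => truncate_leftShift_apply_eq hS hsym hs x hh hk
  have htrunc : c s x = c s z :=
    hloc s fun _ hk => (truncate_apply_eq hS hsym hs x hk).symm
  have hconj : c (h * s * h⁻¹) (fun _ => a₀) = c (h * s * h⁻¹) (leftShift h z) :=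
    hloc _ fun _ hk => (leftShift_truncate_apply_eq hS hsym hs x hh hk).symm
  have hcomm : c (h * s * h⁻¹) (leftShift h z) * c h z = c h (leftShift s z) * c s z := by
    rw [← hc, ← hc, inv_mul_cancel_right]
  have hφ : c h (fun _ => a₀) * hc.constHom a₀ s * (c h fun _ => a₀)⁻¹ =
      c (h * s * h⁻¹) fun _ => a₀ := by
    change hc.constHom a₀ h * _ * (hc.constHom a₀ h)⁻¹ = hc.constHom a₀ (h * s * h⁻¹)
    rw [map_mul, map_mul, map_inv]
  calc c s x = (c h (leftShift s z))⁻¹ * (c (h * s * h⁻¹) (leftShift h z) * c h z) := by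
        rw [hcomm, inv_mul_cancel_left, htrunc]
    _ = (c h (truncate S (M + 1) a₀ (leftShift s x)))⁻¹ *
          (c h (fun _ => a₀) * hc.constHom a₀ s * (c h fun _ => a₀)⁻¹) * c h z := by
        rw [hφ, hconj, hshift, ← mul_assoc]
    _ = _ := by
        simp only [truncTransfer, z]
        group

end Transfer

/-- Main theorem: over a one-ended group, every continuous cocycle on the full
shift with values in a discrete group is cohomologous to a homomorphism. -/
theorem continuous_cocycle_rigidity {G : Type*} [Group G] [Infinite G]
    {A : Type*} [Finite A] [TopologicalSpace A] [DiscreteTopology A]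
    {H : Type*} [Group H] [TopologicalSpace H] [DiscreteTopology H]
    (S : Set G) (hfin : S.Finite) (hsym : ∀ s ∈ S, s⁻¹ ∈ S)
    (hgen : Subgroup.closure S = ⊤)
    (hOneEnd : ∀ r : ℕ, ∃ g₀ : G, InUnbounded S r g₀ ∧
      ∀ g : G, InUnbounded S r g → WConnected S r g g₀)
    (c : G → (G → A) → H) (hcont : ∀ g : G, Continuous (c g))
    (hcoc : ∀ (g h : G) (x : G → A),
      c (g * h) x = c g (fun k => x (h⁻¹ * k)) * c h x) :
    ∃ (φ : G →* H) (b : (G → A) → H), Continuous b ∧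
      ∀ (g : G) (x : G → A), c g x = b (fun k => x (g⁻¹ * k)) * φ g * (b x)⁻¹ := by
  rcases isEmpty_or_nonempty A with hA | ⟨⟨a₀⟩⟩
  · exact ⟨1, fun _ => 1, continuous_const, fun _ x => isEmptyElim (x 1)⟩
  have hc : IsCocycle c := hcoc
  have hS := submonoid_closure_eq_top_of_inv_mem hsym hgen
  choose W hWfin hW using fun g => (hcont g).exists_finite_dependsOn
  obtain ⟨T, hT⟩ := ((hfin.biUnion fun s _ => hWfin s).image (wordNorm S)).bddAbove
  have hwin : ∀ s ∈ S, DependsOn (c s) {k | wordNorm S k ≤ T} :=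
    fun s hs => (hW s).mono fun k hk => hT ⟨k, Set.mem_biUnion hs hk, rfl⟩
  obtain ⟨M, hconn⟩ := exists_wconnected_of_lt_wordNorm hS hsym hfin hOneEnd T
  have hloc g := hc.dependsOn_of_wconnected hwin hS hsym hconn (hWfin g) (hW g)
  obtain ⟨h, hh⟩ := exists_lt_wordNorm hS hfin (2 * M + 2)
  set b := truncTransfer c S (M + 1) a₀ h
  have hclosure : Subgroup.closure S ≤ hc.cohomologousSubgroup (hc.constHom a₀) b :=
    (Subgroup.closure_le _).2 fun s hs => hc.mem_cohomologousSubgroup hS hsym hloc a₀ hh hs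
  refine ⟨hc.constHom a₀, b, ?_, fun g => hclosure (hgen ▸ Subgroup.mem_top g)⟩
  exact (dependsOn_truncTransfer c S (M + 1) a₀ h).continuous_of_finite
    (finite_setOf_wordNorm_le hS hfin (M + 1))
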